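/- Let 0 < D < 1, δ ≥ 0, and let F ⊆ {0,…,N−1} satisfy Z^{(i)} ≥ 1 − 2δ² for every i ∈ F. Then the average over all frozen vectors of the normalized average distortion satisfies Σ_{ũ_F ∈ {0,1}^{|F|}} 2^{−|F|} · (1/N) · D_N(F, ũ_F) ≤ D + 2|F|δ. -/

import Mathlib

/-!
Averaging over the frozen vector amounts to drawing the frozen letters uniformly and all other
letters from their successive posteriors. Without uniform letters the chain rule turns the product
of the posteriors into the channel likelihood, so the normalized distortion is exactly `D`.
The letters of `F` are made uniform one at a time, from the largest index down, so that every
letter before the current index `i` is still drawn from its posterior. The distortion then changes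
by at most the total variation distance between `W^{(i)}(· ∣ 0)` and `W^{(i)}(· ∣ 1)`, which is at
most `√(1 - (Z^{(i)})²) ≤ 2δ`.
-/

open Finset

noncomputable section

/-- The polarization kernel `G₂ = [[1,0],[1,1]]` over GF(2). -/
def G2 : Matrix (Fin 2) (Fin 2) (ZMod 2) := !![1, 0; 1, 1]

/-- Index identification `Fin 2 × Fin (2^n) ≃ Fin (2^(n+1))`. -/
def finPowEquiv (n : ℕ) : Fin 2 × Fin (2 ^ n) ≃ Fin (2 ^ (n + 1)) :=
  finProdFinEquiv.trans (finCongr (by rw [pow_succ]; ring))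

/-- The `n`-fold Kronecker power `G₂^{⊗n}` over GF(2). -/
def kronPow : (n : ℕ) → Matrix (Fin (2 ^ n)) (Fin (2 ^ n)) (ZMod 2)
  | 0 => 1
  | n + 1 => Matrix.reindex (finPowEquiv n) (finPowEquiv n)
      (Matrix.kroneckerMap (· * ·) G2 (kronPow n))

/-- Reversal of the `n`-bit binary expansion of `i`. -/
def bitRevNat (n i : ℕ) : ℕ :=
  ∑ k ∈ Finset.range n, if Nat.testBit i (n - 1 - k) then 2 ^ k else 0

lemma sum_range_two_pow_lt (n : ℕ) : ∑ k ∈ Finset.range n, 2 ^ k < 2 ^ n := by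
  induction n with
  | zero => simp
  | succ m ih => rw [Finset.sum_range_succ, pow_succ]; omega

lemma bitRevNat_lt (n i : ℕ) : bitRevNat n i < 2 ^ n := by
  have h1 : bitRevNat n i ≤ ∑ k ∈ Finset.range n, 2 ^ k :=
    Finset.sum_le_sum (fun k _ => by split <;> simp)
  have h2 := sum_range_two_pow_lt n
  omega

/-- The bit-reversal permutation matrix `Aₙ`. -/
def bitRevMatrix (n : ℕ) : Matrix (Fin (2 ^ n)) (Fin (2 ^ n)) (ZMod 2) :=
  fun i j => if (j : ℕ) = bitRevNat n (i : ℕ) then 1 else 0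

/-- The polar transform matrix `Hₙ = Aₙ G₂^{⊗n}`. -/
def polarH (n : ℕ) : Matrix (Fin (2 ^ n)) (Fin (2 ^ n)) (ZMod 2) :=
  bitRevMatrix n * kronPow n

/-- BSC(D) transition probability `W(y∣x)`. -/
def bsc (D : ℝ) (y x : ZMod 2) : ℝ := if y = x then 1 - D else D

/-- The polar transform `x̄ = ū Hₙ` of a word `ū`. -/
def polarEnc (n : ℕ) (u : Fin (2 ^ n) → ZMod 2) : Fin (2 ^ n) → ZMod 2 :=
  Matrix.vecMul u (polarH n)

/-- `W^{(i)}(ȳ, u₀^{i−1} ∣ u_i)`; it depends on `u` only through coordinates `≤ i`,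
the coordinates `> i` being summed out. -/
def Wi (D : ℝ) (n : ℕ) (y : Fin (2 ^ n) → ZMod 2) (i : Fin (2 ^ n))
    (u : Fin (2 ^ n) → ZMod 2) : ℝ :=
  ((2 : ℝ) ^ (2 ^ n - 1))⁻¹ *
    ∑ v ∈ Finset.univ.filter (fun v : Fin (2 ^ n) → ZMod 2 => ∀ j, j ≤ i → v j = u j),
      ∏ j, bsc D (y j) (polarEnc n v j)

/-- The posterior `P(u_i ∣ u₀^{i−1}, ȳ)`. -/
def post (D : ℝ) (n : ℕ) (y : Fin (2 ^ n) → ZMod 2) (i : Fin (2 ^ n))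
    (u : Fin (2 ^ n) → ZMod 2) : ℝ :=
  Wi D n y i u /
    (Wi D n y i (Function.update u i 0) + Wi D n y i (Function.update u i 1))

/-- The Bhattacharyya parameter `Z^{(i)}`; pasts are represented by words vanishing from
coordinate `i` on. -/
def Zi (D : ℝ) (n : ℕ) (i : Fin (2 ^ n)) : ℝ :=
  ∑ y : Fin (2 ^ n) → ZMod 2,
    ∑ u ∈ Finset.univ.filter (fun u : Fin (2 ^ n) → ZMod 2 => ∀ j, i ≤ j → u j = 0),
      Real.sqrt (Wi D n y i u * Wi D n y i (Function.update u i 1))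

/-- The average distortion $D_N(F, ũ_F)$ of the Standard Model. -/
def avgDist (D : ℝ) (n : ℕ) (F : Finset (Fin (2 ^ n))) (ut : Fin (2 ^ n) → ZMod 2) : ℝ :=
  ∑ y : Fin (2 ^ n) → ZMod 2, ((2 : ℝ) ^ (2 ^ n))⁻¹ *
    ∑ u ∈ Finset.univ.filter (fun u : Fin (2 ^ n) → ZMod 2 => ∀ i ∈ F, u i = ut i),
      (∏ i ∈ Fᶜ, post D n y i u) * (hammingDist y (polarEnc n u) : ℝ)

lemma testBit_bitRevNat (n i m : ℕ) :
    (bitRevNat n i).testBit m = (decide (m < n) && i.testBit (n - 1 - m)) := by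
  have h : bitRevNat n i = ∑ k ∈ (range n).filter (fun k => i.testBit (n - 1 - k)), 2 ^ k :=
    (sum_filter _ _).symm
  rw [Bool.eq_iff_iff, ← Nat.mem_bitIndices, h, ← List.mem_toFinset,
    Finset.toFinset_bitIndices_sum_two_pow]
  simp

lemma bitRevNat_bitRevNat {n i : ℕ} (hi : i < 2 ^ n) : bitRevNat n (bitRevNat n i) = i := by
  refine Nat.eq_of_testBit_eq fun m => ?_
  rw [testBit_bitRevNat, testBit_bitRevNat]
  by_cases hm : m < n
  · simp [hm, show n - 1 - (n - 1 - m) = m by omega, show n - 1 - m < n by omega]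
  · simp [hm, Nat.testBit_eq_false_of_lt (hi.trans_le (Nat.pow_le_pow_right two_pos (not_lt.1 hm)))]

def bitRev (n : ℕ) : Equiv.Perm (Fin (2 ^ n)) :=
  Function.Involutive.toPerm (fun i => ⟨bitRevNat n i, bitRevNat_lt n i⟩)
    fun i => Fin.ext (bitRevNat_bitRevNat i.isLt)

lemma bitRevMatrix_eq_toMatrix (n : ℕ) : bitRevMatrix n = (bitRev n).toPEquiv.toMatrix := by
  ext i j
  simp [bitRevMatrix, PEquiv.toMatrix_apply, Fin.ext_iff, eq_comm]
  rfl

lemma bitRevMatrix_mul_self (n : ℕ) : bitRevMatrix n * bitRevMatrix n = 1 := by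
  have h : (bitRev n).trans (bitRev n) = Equiv.refl _ :=
    Equiv.ext fun i => Fin.ext (bitRevNat_bitRevNat i.isLt)
  rw [bitRevMatrix_eq_toMatrix, ← PEquiv.toMatrix_trans, ← Equiv.toPEquiv_trans, h,
    Equiv.toPEquiv_refl, PEquiv.toMatrix_refl]

lemma G2_mul_self : G2 * G2 = 1 := by
  decide

lemma kronPow_mul_self (n : ℕ) : kronPow n * kronPow n = 1 := by
  induction n with
  | zero => simp [kronPow]
  | succ n ih =>
    rw [kronPow, Matrix.reindex_apply, Matrix.submatrix_mul_equiv, ← Matrix.mul_kronecker_mul,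
      ih, G2_mul_self, Matrix.one_kronecker_one, Matrix.submatrix_one_equiv]

lemma polarEnc_bijective (n : ℕ) : Function.Bijective (polarEnc n) := by
  have hinv : polarH n * (kronPow n * bitRevMatrix n) = 1 := by
    rw [polarH, Matrix.mul_assoc, ← Matrix.mul_assoc (kronPow n), kronPow_mul_self,
      Matrix.one_mul, bitRevMatrix_mul_self]
  refine (Fintype.bijective_iff_injective_and_card _).2 ⟨fun u v huv => ?_, rfl⟩
  simpa [polarEnc, Matrix.vecMul_vecMul, hinv] using
    congrArg (Matrix.vecMul · (kronPow n * bitRevMatrix n)) huv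

section Sequential

variable {N : ℕ} {β : Type*} [Fintype β] [DecidableEq β] [Zero β]

def vanishingFrom (N t : ℕ) : Finset (Fin N → β) :=
  univ.filter fun u => ∀ j : Fin N, t ≤ (j : ℕ) → u j = 0

@[simp]
lemma mem_vanishingFrom {t : ℕ} {u : Fin N → β} :
    u ∈ vanishingFrom N t ↔ ∀ j : Fin N, t ≤ (j : ℕ) → u j = 0 := by
  simp [vanishingFrom]

lemma vanishingFrom_of_le {t : ℕ} (ht : N ≤ t) : vanishingFrom (β := β) N t = univ :=
  filter_true_of_mem fun _ _ j hj => absurd j.isLt (by omega)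

lemma update_zero_of_mem_vanishingFrom {i : Fin N} {u : Fin N → β}
    (hu : u ∈ vanishingFrom N i) : Function.update u i 0 = u :=
  Function.update_eq_self_iff.2 (mem_vanishingFrom.1 hu i le_rfl).symm

lemma sum_vanishingFrom_succ {M : Type*} [AddCommMonoid M] {t : ℕ} (ht : t < N)
    (f : (Fin N → β) → M) :
    ∑ u ∈ vanishingFrom N (t + 1), f u
      = ∑ u ∈ vanishingFrom N t, ∑ b, f (Function.update u ⟨t, ht⟩ b) := by
  rw [← sum_product']
  set a : Fin N := ⟨t, ht⟩
  have hne : ∀ j : Fin N, j ≠ a → (j : ℕ) ≠ t := fun j hj h => hj (Fin.ext h)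
  refine (sum_nbij' (fun p : (Fin N → β) × β => Function.update p.1 a p.2)
    (fun u => (Function.update u a 0, u a)) ?_ ?_ ?_ ?_ fun _ _ => rfl).symm
  · simp only [mem_product, mem_vanishingFrom, mem_univ, and_true]
    intro p hp j hj
    rw [Function.update_of_ne fun h => by subst h; simp [a] at hj]
    exact hp j (by omega)
  · simp only [mem_product, mem_vanishingFrom, mem_univ, and_true]
    intro u hu j hj
    by_cases hja : j = a
    · subst hja; simp
    · rw [Function.update_of_ne hja]; exact hu j (by have := hne j hja; omega)
  · rintro ⟨u, b⟩ hu
    simp only [mem_product, mem_vanishingFrom] at hu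
    simp [← hu.1 a le_rfl]
  · intro u _
    simp

end Sequential

section Kernel

variable {N : ℕ} {β : Type*} [Fintype β]

/-- `c j u` is the probability of the letter `u j` given the past `u` on coordinates `< j`. -/
structure IsSequentialKernel (c : Fin N → (Fin N → β) → ℝ) : Prop where
  congr : ∀ j u u', (∀ k ≤ j, u k = u' k) → c j u = c j u'
  sum_update : ∀ j u, ∑ b, c j (Function.update u j b) = 1

namespace IsSequentialKernel

variable {c c' : Fin N → (Fin N → β) → ℝ}

lemma piecewise (hc : IsSequentialKernel c) (hc' : IsSequentialKernel c') (G : Finset (Fin N)) :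
    IsSequentialKernel (G.piecewise c c') where
  congr j u u' h := by
    by_cases hj : j ∈ G <;> simp [hj, hc.congr j u u' h, hc'.congr j u u' h]
  sum_update j u := by
    by_cases hj : j ∈ G <;> simp [hj, hc.sum_update j u, hc'.sum_update j u]

variable [DecidableEq β] [Zero β]

lemma sum_prod_tail_mul (hc : IsSequentialKernel c) (t : ℕ) (g : (Fin N → β) → ℝ)
    (hg : ∀ u u', (∀ j : Fin N, (j : ℕ) < t → u j = u' j) → g u = g u') :
    ∑ u, (∏ j ∈ univ.filter (fun j : Fin N => t ≤ (j : ℕ)), c j u) * g u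
      = ∑ u ∈ vanishingFrom N t, g u := by
  by_cases ht : N ≤ t
  · rw [vanishingFrom_of_le ht, filter_false_of_mem fun j _ => by omega]
    simp
  set a : Fin N := ⟨t, by omega⟩
  have hsplit : univ.filter (fun j : Fin N => t ≤ (j : ℕ))
      = insert a (univ.filter fun j : Fin N => t + 1 ≤ (j : ℕ)) := by
    ext j; simp [a, Fin.ext_iff]; omega
  have ih := hc.sum_prod_tail_mul (t + 1) (fun u => c a u * g u) fun u u' h => by
    rw [hc.congr a u u' fun k hk => h k (by rw [Fin.le_def] at hk; simp [a] at hk; omega),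
      hg u u' fun j hj => h j (by omega)]
  calc ∑ u, (∏ j ∈ univ.filter (fun j : Fin N => t ≤ (j : ℕ)), c j u) * g u
      = ∑ u, (∏ j ∈ univ.filter (fun j : Fin N => t + 1 ≤ (j : ℕ)), c j u) * (c a u * g u) := by
        refine sum_congr rfl fun u _ => ?_
        rw [hsplit, prod_insert (by simp [a])]
        ring
    _ = ∑ u ∈ vanishingFrom N t, ∑ b, c a (Function.update u a b) * g (Function.update u a b) := by
        rw [ih, sum_vanishingFrom_succ]
    _ = ∑ u ∈ vanishingFrom N t, g u := by
        refine sum_congr rfl fun u _ => ?_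
        have hgu : ∀ b, g (Function.update u a b) = g u := fun b =>
          hg _ _ fun j hj => Function.update_of_ne (by rintro rfl; simp [a] at hj) _ _
        simp_rw [hgu, ← sum_mul, hc.sum_update, one_mul]
termination_by N - t

lemma sum_prod_mul_sub_sum_prod_mul_le (hc : IsSequentialKernel c) (hc' : IsSequentialKernel c')
    (hc0 : ∀ j u, 0 ≤ c j u) {m : Fin N} (hcc' : ∀ j ≠ m, c' j = c j)
    (f : (Fin N → β) → ℝ) (hf0 : ∀ u, 0 ≤ f u) (hf1 : ∀ u, f u ≤ 1) :
    ∑ u, (∏ j, c' j u) * f u - ∑ u, (∏ j, c j u) * f u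
      ≤ ∑ u ∈ vanishingFrom N (m + 1), (∏ j ∈ Iio m, c j u) * |c' m u - c m u| := by
  have hIoi : Ioi m = univ.filter fun j : Fin N => (m : ℕ) + 1 ≤ (j : ℕ) := by
    ext j; simp only [mem_Ioi, mem_filter, mem_univ, true_and, Fin.lt_def]; omega
  have hsplit : ∀ d : Fin N → (Fin N → β) → ℝ, ∀ u,
      ∏ j, d j u = (∏ j ∈ Iio m, d j u) * d m u * ∏ j ∈ Ioi m, d j u := fun d u => by
    rw [mul_assoc, mul_prod_Ioi_eq_prod_Ici (f := (d · u)),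
      ← prod_filter_mul_prod_filter_not univ (· < m)]
    congr 2 <;> ext j <;> simp
  have hpast : ∀ d : Fin N → (Fin N → β) → ℝ, (∀ j ≠ m, d j = c j) → ∀ u,
      (∏ j ∈ Iio m, d j u) = ∏ j ∈ Iio m, c j u ∧ (∏ j ∈ Ioi m, d j u) = ∏ j ∈ Ioi m, c j u :=
    fun d hd u => ⟨prod_congr rfl fun j hj => by rw [hd j (mem_Iio.1 hj).ne],
      prod_congr rfl fun j hj => by rw [hd j (mem_Ioi.1 hj).ne']⟩
  calc ∑ u, (∏ j, c' j u) * f u - ∑ u, (∏ j, c j u) * f u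
      = ∑ u, (∏ j ∈ Ioi m, c j u) * ((∏ j ∈ Iio m, c j u) * ((c' m u - c m u) * f u)) := by
        rw [← sum_sub_distrib]
        refine sum_congr rfl fun u _ => ?_
        rw [hsplit c', hsplit c, (hpast c' hcc' u).1, (hpast c' hcc' u).2]
        ring
    _ ≤ ∑ u, (∏ j ∈ Ioi m, c j u) * ((∏ j ∈ Iio m, c j u) * |c' m u - c m u|) := by
        refine sum_le_sum fun u _ => ?_
        have hdev : (c' m u - c m u) * f u ≤ |c' m u - c m u| := by
          nlinarith [le_abs_self (c' m u - c m u), abs_nonneg (c' m u - c m u), hf0 u, hf1 u]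
        have := prod_nonneg fun j (_ : j ∈ Ioi m) => hc0 j u
        have := prod_nonneg fun j (_ : j ∈ Iio m) => hc0 j u
        gcongr
    _ = ∑ u ∈ vanishingFrom N (m + 1), (∏ j ∈ Iio m, c j u) * |c' m u - c m u| := by
        rw [hIoi]
        refine hc.sum_prod_tail_mul _ _ fun u u' h => ?_
        have hle : ∀ k ≤ m, u k = u' k := fun k hk => h k (by rw [Fin.le_def] at hk; omega)
        rw [prod_congr rfl fun j hj => hc.congr j u u' fun k hk =>
            hle k (hk.trans (mem_Iio.1 hj).le),
          hc.congr m u u' hle, hc'.congr m u u' hle]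

end IsSequentialKernel

end Kernel

section PrefixSum

variable {N : ℕ} {β : Type*} [Fintype β] [DecidableEq β] (w : (Fin N → β) → ℝ)

def prefixSum (k : ℕ) (u : Fin N → β) : ℝ :=
  ∑ v ∈ univ.filter (fun v : Fin N → β => ∀ j : Fin N, (j : ℕ) < k → v j = u j), w v

variable {w}

lemma prefixSum_congr {k : ℕ} {u u' : Fin N → β} (h : ∀ j : Fin N, (j : ℕ) < k → u j = u' j) :
    prefixSum w k u = prefixSum w k u' := by
  unfold prefixSum
  congr 1
  ext v
  simp only [mem_filter, mem_univ, true_and]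
  exact forall_congr' fun j => imp_congr_right fun hj => by rw [h j hj]

lemma prefixSum_zero (u : Fin N → β) : prefixSum w 0 u = ∑ v, w v := by
  simp [prefixSum]

lemma prefixSum_of_le {k : ℕ} (hk : N ≤ k) (u : Fin N → β) : prefixSum w k u = w u := by
  rw [prefixSum, filter_congr (q := (· = u)) fun v _ =>
    ⟨fun h => funext fun j => h j (by omega), fun h j _ => h ▸ rfl⟩, filter_eq',
    if_pos (mem_univ _), sum_singleton]

lemma prefixSum_update (j : Fin N) (u : Fin N → β) (b : β) :
    prefixSum w j (Function.update u j b) = prefixSum w j u :=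
  prefixSum_congr fun k hk => Function.update_of_ne (by rintro rfl; omega) _ _

lemma prefixSum_pos (hw : ∀ v, 0 < w v) (k : ℕ) (u : Fin N → β) : 0 < prefixSum w k u :=
  sum_pos (fun v _ => hw v) ⟨u, by simp⟩

lemma prefixSum_eq_sum_update {t : ℕ} (ht : t < N) (u : Fin N → β) :
    prefixSum w t u = ∑ b, prefixSum w (t + 1) (Function.update u ⟨t, ht⟩ b) := by
  rw [prefixSum, ← sum_fiberwise _ (fun v : Fin N → β => v ⟨t, ht⟩)]
  refine sum_congr rfl fun b _ => ?_
  rw [prefixSum, filter_filter]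
  congr 1
  ext v
  simp only [mem_filter, mem_univ, true_and]
  constructor
  · rintro ⟨hv, rfl⟩ j hj
    rcases Nat.lt_succ_iff_lt_or_eq.1 hj with hj | hj
    · rw [Function.update_of_ne (by rintro rfl; simp at hj)]; exact hv j hj
    · obtain rfl : j = ⟨t, ht⟩ := Fin.ext hj
      simp
  · intro hv
    refine ⟨fun j hj => ?_, by simpa using hv ⟨t, ht⟩ (by simp)⟩
    rw [hv j (by omega), Function.update_of_ne (by rintro rfl; simp at hj)]

lemma sum_prefixSum [Zero β] (t : ℕ) : ∑ u ∈ vanishingFrom N t, prefixSum w t u = ∑ v, w v := by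
  set trunc : (Fin N → β) → Fin N → β := fun v j => if (j : ℕ) < t then v j else 0
  rw [← sum_fiberwise_of_maps_to (s := univ) (t := vanishingFrom N t) (g := trunc) (f := w)
    fun v _ => mem_vanishingFrom.2 fun j hj => if_neg (by omega)]
  refine sum_congr rfl fun u hu => ?_
  rw [prefixSum]
  congr 1
  ext v
  simp only [mem_filter, mem_univ, true_and, funext_iff, trunc]
  refine forall_congr' fun j => ?_
  by_cases hj : (j : ℕ) < t
  · simp [hj]
  · simp [hj, (mem_vanishingFrom.1 hu j (by omega)).symm]

lemma prod_prefixSum_div (hw : ∀ v, 0 < w v) (u : Fin N → β) {k : ℕ} (hk : k ≤ N) :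
    ∏ j ∈ univ.filter (fun j : Fin N => (j : ℕ) < k), prefixSum w (j + 1) u / prefixSum w j u
      = prefixSum w k u / prefixSum w 0 u := by
  induction k with
  | zero => simp [div_self (prefixSum_pos hw 0 u).ne']
  | succ k ih =>
    have hsplit : univ.filter (fun j : Fin N => (j : ℕ) < k + 1)
        = insert ⟨k, hk⟩ (univ.filter fun j : Fin N => (j : ℕ) < k) := by
      ext j; simp [Fin.ext_iff]; omega
    rw [hsplit, prod_insert (by simp), ih (by omega)]
    field_simp [(prefixSum_pos hw k u).ne']

end PrefixSum

lemma sq_sum_abs_sub_le {ι : Type*} (s : Finset ι) {A B : ι → ℝ} (hA : ∀ i ∈ s, 0 ≤ A i)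
    (hB : ∀ i ∈ s, 0 ≤ B i) (hAB : ∑ i ∈ s, (A i + B i) = 2) :
    (∑ i ∈ s, |A i - B i| / 2) ^ 2 ≤ 1 - (∑ i ∈ s, √(A i * B i)) ^ 2 := by
  set Z := ∑ i ∈ s, √(A i * B i) with hZ
  have hsq : ∀ i ∈ s, √(A i) ^ 2 = A i ∧ √(B i) ^ 2 = B i ∧ √(A i * B i) = √(A i) * √(B i) :=
    fun i hi => ⟨Real.sq_sqrt (hA i hi), Real.sq_sqrt (hB i hi), Real.sqrt_mul (hA i hi) _⟩
  have hfac : ∀ i ∈ s, |A i - B i| = |√(A i) - √(B i)| * (√(A i) + √(B i)) := fun i hi => by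
    obtain ⟨ha, hb, -⟩ := hsq i hi
    rw [← abs_of_nonneg (by positivity : 0 ≤ √(A i) + √(B i)), ← abs_mul]
    congr 1
    linear_combination hb - ha
  have hminus : ∑ i ∈ s, |√(A i) - √(B i)| ^ 2 = ∑ i ∈ s, (A i + B i) - 2 * Z := by
    rw [hZ, mul_sum, ← sum_sub_distrib]
    refine sum_congr rfl fun i hi => ?_
    obtain ⟨ha, hb, hab⟩ := hsq i hi
    rw [sq_abs, hab]
    linear_combination ha + hb
  have hplus : ∑ i ∈ s, (√(A i) + √(B i)) ^ 2 = ∑ i ∈ s, (A i + B i) + 2 * Z := by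
    rw [hZ, mul_sum, ← sum_add_distrib]
    refine sum_congr rfl fun i hi => ?_
    obtain ⟨ha, hb, hab⟩ := hsq i hi
    rw [hab]
    linear_combination ha + hb
  have hcs := sum_mul_sq_le_sq_mul_sq s (fun i => |√(A i) - √(B i)|) (fun i => √(A i) + √(B i))
  rw [hminus, hplus, hAB, ← sum_congr rfl hfac] at hcs
  rw [← sum_div, div_pow]
  nlinarith

lemma sum_abs_sub_le_of_le_sum_sqrt {ι : Type*} (s : Finset ι) {A B : ι → ℝ}
    (hA : ∀ i ∈ s, 0 ≤ A i) (hB : ∀ i ∈ s, 0 ≤ B i) (hAB : ∑ i ∈ s, (A i + B i) = 2)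
    {δ : ℝ} (hδ : 0 ≤ δ) (hZ : 1 - 2 * δ ^ 2 ≤ ∑ i ∈ s, √(A i * B i)) :
    ∑ i ∈ s, |A i - B i| / 2 ≤ 2 * δ := by
  have htv := sq_sum_abs_sub_le s hA hB hAB
  have hZ0 : 0 ≤ ∑ i ∈ s, √(A i * B i) := sum_nonneg fun i _ => Real.sqrt_nonneg _
  refine le_of_sq_le_sq ?_ (by positivity)
  nlinarith [sq_nonneg (∑ i ∈ s, |A i - B i| / 2)]

lemma sum_prod_mul_apply {ι α : Type*} [Fintype ι] [DecidableEq ι] [Fintype α]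
    (p : ι → α → ℝ) (hp : ∀ i, ∑ a, p i a = 1) (k : ι) (f : α → ℝ) :
    ∑ x : ι → α, (∏ i, p i (x i)) * f (x k) = ∑ a, p k a * f a := by
  set q : ι → α → ℝ := fun i a => if i = k then p i a * f a else p i a
  have hq : ∀ x : ι → α, (∏ i, p i (x i)) * f (x k) = ∏ i, q i (x i) := fun x => by
    rw [← mul_prod_erase univ _ (mem_univ k), ← mul_prod_erase univ _ (mem_univ k),
      prod_congr rfl fun i hi => if_neg (ne_of_mem_erase hi)]
    simp only [q, if_pos rfl]
    ring
  rw [sum_congr rfl fun x _ => hq x, ← Fintype.prod_sum, ← mul_prod_erase univ _ (mem_univ k),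
    prod_congr rfl (g := fun _ => 1) fun i hi => by simp only [q, if_neg (ne_of_mem_erase hi), hp],
    prod_const_one, mul_one]
  simp [q]

lemma sum_prod_mul_hammingDist {N : ℕ} {α : Type*} [Fintype α] [DecidableEq α]
    (p : Fin N → α → ℝ) (hp : ∀ i, ∑ a, p i a = 1) (y : Fin N → α) :
    ∑ x : Fin N → α, (∏ i, p i (x i)) * (hammingDist y x : ℝ)
      = ∑ k, ∑ a, p k a * if y k ≠ a then 1 else 0 := by
  simp_rw [hammingDist, card_filter, Nat.cast_sum, mul_sum]
  rw [sum_comm]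
  refine sum_congr rfl fun k _ => ?_
  rw [← sum_prod_mul_apply p hp k]
  simp

lemma sum_supported_sum_agree {N : ℕ} {β M : Type*} [Fintype β] [DecidableEq β] [Zero β]
    [AddCommMonoid M] (F : Finset (Fin N)) (f : (Fin N → β) → M) :
    ∑ ut ∈ univ.filter (fun ut : Fin N → β => ∀ i, i ∉ F → ut i = 0),
        ∑ u ∈ univ.filter (fun u : Fin N → β => ∀ i ∈ F, u i = ut i), f u
      = ∑ u, f u := by
  rw [← sum_fiberwise_of_maps_to (s := univ)
    (t := univ.filter fun ut : Fin N → β => ∀ i, i ∉ F → ut i = 0)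
    (g := fun u i => if i ∈ F then u i else 0) (f := f) fun u _ => by simp +contextual]
  refine sum_congr rfl fun ut hut => ?_
  congr 1
  ext u
  simp only [mem_filter, mem_univ, true_and, funext_iff] at hut ⊢
  refine ⟨fun h i => ?_, fun h i hi => by simpa [hi] using h i⟩
  by_cases hi : i ∈ F
  · simp [hi, h i hi]
  · simp [hi, hut i hi]

lemma sum_zmod_two {M : Type*} [AddCommMonoid M] (f : ZMod 2 → M) : ∑ b, f b = f 0 + f 1 :=
  Fin.sum_univ_two f

lemma isSequentialKernel_const_half {N : ℕ} :
    IsSequentialKernel fun (_ : Fin N) (_ : Fin N → ZMod 2) => (1 / 2 : ℝ) where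
  congr _ _ _ _ := rfl
  sum_update _ _ := by rw [sum_zmod_two]; norm_num

lemma sum_bsc (D : ℝ) (y : ZMod 2) : ∑ x, bsc D y x = 1 := by
  rw [sum_zmod_two]
  rcases (by decide : ∀ z : ZMod 2, z = 0 ∨ z = 1) y with rfl | rfl <;> simp [bsc]

section Channel

variable {D : ℝ} {n : ℕ}

def likelihood (D : ℝ) (n : ℕ) (y u : Fin (2 ^ n) → ZMod 2) : ℝ :=
  ∏ j, bsc D (y j) (polarEnc n u j)

lemma likelihood_pos (hD0 : 0 < D) (hD1 : D < 1) (y u : Fin (2 ^ n) → ZMod 2) :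
    0 < likelihood D n y u :=
  prod_pos fun j _ => by unfold bsc; split_ifs <;> linarith

lemma sum_likelihood (D : ℝ) (n : ℕ) (y : Fin (2 ^ n) → ZMod 2) : ∑ u, likelihood D n y u = 1 := by
  unfold likelihood
  rw [Fintype.sum_bijective (polarEnc n) (polarEnc_bijective n) _ (fun x => ∏ j, bsc D (y j) (x j))
    fun _ => rfl, ← Fintype.prod_sum]
  simp [sum_bsc]

lemma Wi_eq_prefixSum (y : Fin (2 ^ n) → ZMod 2) (i : Fin (2 ^ n)) (u : Fin (2 ^ n) → ZMod 2) :
    Wi D n y i u = ((2 : ℝ) ^ (2 ^ n - 1))⁻¹ * prefixSum (likelihood D n y) (i + 1) u := by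
  rw [Wi, prefixSum]
  exact congrArg _ (sum_congr (filter_congr fun v _ =>
    forall_congr' fun j => by rw [Fin.le_def, Nat.lt_succ_iff]) fun _ _ => rfl)

lemma Wi_update_zero_add_Wi_update_one (y : Fin (2 ^ n) → ZMod 2) (i : Fin (2 ^ n))
    (u : Fin (2 ^ n) → ZMod 2) :
    Wi D n y i (Function.update u i 0) + Wi D n y i (Function.update u i 1)
      = ((2 : ℝ) ^ (2 ^ n - 1))⁻¹ * prefixSum (likelihood D n y) i u := by
  rw [Wi_eq_prefixSum, Wi_eq_prefixSum, ← mul_add, prefixSum_eq_sum_update i.isLt u,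
    sum_zmod_two]

lemma post_eq_prefixSum_div (y : Fin (2 ^ n) → ZMod 2) (i : Fin (2 ^ n))
    (u : Fin (2 ^ n) → ZMod 2) :
    post D n y i u = prefixSum (likelihood D n y) (i + 1) u / prefixSum (likelihood D n y) i u := by
  rw [post, Wi_update_zero_add_Wi_update_one, Wi_eq_prefixSum,
    mul_div_mul_left _ _ (by positivity)]

lemma isSequentialKernel_post (hD0 : 0 < D) (hD1 : D < 1) (y : Fin (2 ^ n) → ZMod 2) :
    IsSequentialKernel (post D n y) where
  congr j u u' h := by
    rw [post_eq_prefixSum_div, post_eq_prefixSum_div,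
      prefixSum_congr fun k hk => h k (Fin.le_def.2 (by omega)),
      prefixSum_congr fun k hk => h k (Fin.le_def.2 (by omega))]
  sum_update j u := by
    simp_rw [post_eq_prefixSum_div, prefixSum_update, ← sum_div]
    rw [← prefixSum_eq_sum_update j.isLt,
      div_self (prefixSum_pos (likelihood_pos hD0 hD1 y) _ _).ne']

lemma prod_post (hD0 : 0 < D) (hD1 : D < 1) (y u : Fin (2 ^ n) → ZMod 2) {k : ℕ}
    (hk : k ≤ 2 ^ n) :
    ∏ j ∈ univ.filter (fun j : Fin (2 ^ n) => (j : ℕ) < k), post D n y j u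
      = prefixSum (likelihood D n y) k u := by
  simp_rw [post_eq_prefixSum_div]
  rw [prod_prefixSum_div (likelihood_pos hD0 hD1 y) u hk, prefixSum_zero, sum_likelihood,
    div_one]

lemma Zi_eq_sum_vanishingFrom (i : Fin (2 ^ n)) :
    Zi D n i = ∑ y, ∑ u ∈ vanishingFrom (2 ^ n) i,
      √(Wi D n y i u * Wi D n y i (Function.update u i 1)) := by
  rw [Zi]
  congr! 2

lemma two_pow_eq_two_mul_two_pow_pred (n : ℕ) : (2 : ℝ) ^ 2 ^ n = 2 * 2 ^ (2 ^ n - 1) := by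
  rw [← pow_succ', Nat.sub_add_cancel Nat.one_le_two_pow]

lemma sum_sum_Wi_add_Wi (i : Fin (2 ^ n)) :
    ∑ y, ∑ u ∈ vanishingFrom (2 ^ n) i,
      (Wi D n y i u + Wi D n y i (Function.update u i 1)) = 2 := by
  have hy : ∀ y, ∑ u ∈ vanishingFrom (2 ^ n) i, (Wi D n y i u + Wi D n y i (Function.update u i 1))
      = ((2 : ℝ) ^ (2 ^ n - 1))⁻¹ := fun y => by
    rw [← mul_one ((2 : ℝ) ^ (2 ^ n - 1))⁻¹, ← sum_likelihood D n y, ← sum_prefixSum, mul_sum]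
    refine sum_congr rfl fun u hu => ?_
    rw [← Wi_update_zero_add_Wi_update_one, update_zero_of_mem_vanishingFrom hu]
  simp_rw [hy, sum_const, card_univ, Fintype.card_fun, Fintype.card_fin, ZMod.card, nsmul_eq_mul]
  push_cast
  rw [two_pow_eq_two_mul_two_pow_pred, mul_assoc, mul_inv_cancel₀ (by positivity), mul_one]

lemma sum_sum_abs_Wi_sub_Wi_le (hD0 : 0 < D) (hD1 : D < 1) {δ : ℝ} (hδ : 0 ≤ δ)
    {i : Fin (2 ^ n)} (hZ : 1 - 2 * δ ^ 2 ≤ Zi D n i) :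
    ∑ y, ∑ u ∈ vanishingFrom (2 ^ n) i, |Wi D n y i u - Wi D n y i (Function.update u i 1)| / 2
      ≤ 2 * δ := by
  have hWi : ∀ y u, 0 ≤ Wi D n y i u := fun y u => by
    rw [Wi_eq_prefixSum]; exact mul_nonneg (by positivity)
      (prefixSum_pos (likelihood_pos hD0 hD1 y) _ _).le
  rw [Zi_eq_sum_vanishingFrom, ← sum_product'] at hZ
  rw [← sum_product']
  refine sum_abs_sub_le_of_le_sum_sqrt _ (fun p _ => hWi p.1 p.2) (fun p _ => hWi p.1 _) ?_ hδ hZ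
  rw [sum_product]
  exact sum_sum_Wi_add_Wi i

end Channel

section Hybrid

variable {D : ℝ} {n : ℕ}

def hybridKernel (D : ℝ) (n : ℕ) (G : Finset (Fin (2 ^ n))) (y : Fin (2 ^ n) → ZMod 2) :
    Fin (2 ^ n) → (Fin (2 ^ n) → ZMod 2) → ℝ :=
  G.piecewise (fun _ _ => 1 / 2) (post D n y)

def hybridDistortion (D : ℝ) (n : ℕ) (G : Finset (Fin (2 ^ n))) : ℝ :=
  ∑ y, ((2 : ℝ) ^ 2 ^ n)⁻¹ * ∑ u, (∏ j, hybridKernel D n G y j u) *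
    ((hammingDist y (polarEnc n u) : ℝ) / (2 ^ n : ℕ))

lemma isSequentialKernel_hybridKernel (hD0 : 0 < D) (hD1 : D < 1) (G : Finset (Fin (2 ^ n)))
    (y : Fin (2 ^ n) → ZMod 2) : IsSequentialKernel (hybridKernel D n G y) :=
  isSequentialKernel_const_half.piecewise (isSequentialKernel_post hD0 hD1 y) G

lemma hybridKernel_nonneg (hD0 : 0 < D) (hD1 : D < 1) (G : Finset (Fin (2 ^ n)))
    (y : Fin (2 ^ n) → ZMod 2) (j : Fin (2 ^ n)) (u : Fin (2 ^ n) → ZMod 2) :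
    0 ≤ hybridKernel D n G y j u := by
  by_cases hj : j ∈ G
  · simp [hybridKernel, hj]
  · rw [hybridKernel, piecewise_eq_of_notMem _ _ _ hj, post_eq_prefixSum_div]
    exact div_nonneg (prefixSum_pos (likelihood_pos hD0 hD1 y) _ _).le
      (prefixSum_pos (likelihood_pos hD0 hD1 y) _ _).le

lemma hybridDistortion_empty (hD0 : 0 < D) (hD1 : D < 1) : hybridDistortion D n ∅ = D := by
  have hy : ∀ y, ∑ u, (∏ j, hybridKernel D n ∅ y j u) *
      ((hammingDist y (polarEnc n u) : ℝ) / (2 ^ n : ℕ)) = D := fun y => by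
    have hprod : ∀ u, ∏ j, hybridKernel D n ∅ y j u = likelihood D n y u := fun u => by
      rw [← prefixSum_of_le (w := likelihood D n y) le_rfl u, ← prod_post hD0 hD1 y u le_rfl,
        filter_true_of_mem fun j _ => j.isLt]
      simp [hybridKernel]
    simp_rw [hprod, ← mul_div_assoc, ← sum_div]
    rw [Fintype.sum_bijective (polarEnc n) (polarEnc_bijective n)
      (fun u => likelihood D n y u * (hammingDist y (polarEnc n u) : ℝ))
      (fun x => (∏ j, bsc D (y j) (x j)) * (hammingDist y x : ℝ)) fun _ => rfl,
      sum_prod_mul_hammingDist _ (fun j => sum_bsc D (y j))]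
    have hk : ∀ k, ∑ a, bsc D (y k) a * (if y k ≠ a then 1 else 0) = D := fun k => by
      rw [sum_zmod_two]
      rcases (by decide : ∀ z : ZMod 2, z = 0 ∨ z = 1) (y k) with h | h <;> simp [bsc, h]
    rw [sum_congr rfl fun k _ => hk k, sum_const, card_univ, Fintype.card_fin, nsmul_eq_mul,
      mul_div_cancel_left₀ _ (by positivity)]
  simp_rw [hybridDistortion, hy, sum_const, card_univ, Fintype.card_fun, Fintype.card_fin,
    ZMod.card, nsmul_eq_mul]
  push_cast
  rw [← mul_assoc, mul_inv_cancel₀ (by positivity), one_mul]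

lemma sum_prefixSum_mul_abs_half_sub_post (hD0 : 0 < D) (hD1 : D < 1) (y : Fin (2 ^ n) → ZMod 2)
    (m : Fin (2 ^ n)) :
    ∑ u ∈ vanishingFrom (2 ^ n) (m + 1),
        prefixSum (likelihood D n y) m u * |1 / 2 - post D n y m u|
      = 2 ^ (2 ^ n - 1) * ∑ u ∈ vanishingFrom (2 ^ n) m,
          |Wi D n y m u - Wi D n y m (Function.update u m 1)| := by
  have hhalf : ∀ a b : ℝ, 0 < a + b →
      (a + b) * |1 / 2 - a / (a + b)| + (a + b) * |1 / 2 - b / (a + b)| = |a - b| := by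
    intro a b hab
    have ha : (a + b) * (1 / 2 - a / (a + b)) = -((a - b) / 2) := by field_simp; ring
    have hb : (a + b) * (1 / 2 - b / (a + b)) = (a - b) / 2 := by field_simp; ring
    rw [← abs_of_pos hab, ← abs_mul, ← abs_mul, abs_of_pos hab, ha, hb, abs_neg, abs_div, abs_two]
    ring
  rw [sum_vanishingFrom_succ m.isLt, mul_sum]
  refine sum_congr rfl fun u hu => ?_
  have hS : prefixSum (likelihood D n y) m u
      = prefixSum (likelihood D n y) (m + 1) (Function.update u m 0)
        + prefixSum (likelihood D n y) (m + 1) (Function.update u m 1) := by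
    rw [prefixSum_eq_sum_update m.isLt, sum_zmod_two]
  simp only [Fin.eta]
  rw [sum_zmod_two, post_eq_prefixSum_div, post_eq_prefixSum_div, prefixSum_update,
    prefixSum_update, hS,
    hhalf _ _ (hS ▸ prefixSum_pos (likelihood_pos hD0 hD1 y) _ _), Wi_eq_prefixSum,
    Wi_eq_prefixSum, ← mul_sub, abs_mul, abs_of_pos (by positivity : (0 : ℝ) < (2 ^ (2 ^ n - 1))⁻¹),
    ← mul_assoc, mul_inv_cancel₀ (by positivity), one_mul, update_zero_of_mem_vanishingFrom hu]

lemma sum_hybridKernel_insert_sub_le (hD0 : 0 < D) (hD1 : D < 1) {m : Fin (2 ^ n)}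
    {G : Finset (Fin (2 ^ n))} (hm : ∀ j ∈ G, m < j) (y : Fin (2 ^ n) → ZMod 2) :
    ∑ u, (∏ j, hybridKernel D n (insert m G) y j u) *
        ((hammingDist y (polarEnc n u) : ℝ) / (2 ^ n : ℕ))
      - ∑ u, (∏ j, hybridKernel D n G y j u) * ((hammingDist y (polarEnc n u) : ℝ) / (2 ^ n : ℕ))
    ≤ 2 ^ (2 ^ n - 1) * ∑ u ∈ vanishingFrom (2 ^ n) m,
        |Wi D n y m u - Wi D n y m (Function.update u m 1)| := by
  have hpost : ∀ j ∉ G, hybridKernel D n G y j = post D n y j := fun j hj =>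
    piecewise_eq_of_notMem _ _ _ hj
  have hIio : Iio m = univ.filter fun j : Fin (2 ^ n) => (j : ℕ) < m := by
    ext j; simp only [mem_Iio, mem_filter, mem_univ, true_and, Fin.lt_def]
  refine ((isSequentialKernel_hybridKernel hD0 hD1 G y).sum_prod_mul_sub_sum_prod_mul_le
    (isSequentialKernel_hybridKernel hD0 hD1 _ y) (hybridKernel_nonneg hD0 hD1 G y)
    (fun j hj => piecewise_insert_of_ne _ _ _ hj) _ (fun u => by positivity)
    (fun u => div_le_one_of_le₀ (by exact_mod_cast
      hammingDist_le_card_fintype.trans_eq (Fintype.card_fin _)) (by positivity))).trans_eq ?_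
  rw [← sum_prefixSum_mul_abs_half_sub_post hD0 hD1 y m]
  refine sum_congr rfl fun u _ => ?_
  rw [hIio, prod_congr rfl fun j hj => congrFun (hpost j fun hjG =>
      absurd (hm j hjG) (not_lt.2 (Fin.le_def.2 (mem_filter.1 hj).2.le))) u,
    prod_post hD0 hD1 y u m.isLt.le, hpost m fun h => lt_irrefl m (hm m h), hybridKernel,
    piecewise_insert_self]

lemma hybridDistortion_insert_le (hD0 : 0 < D) (hD1 : D < 1) {δ : ℝ} (hδ : 0 ≤ δ)
    {m : Fin (2 ^ n)} {G : Finset (Fin (2 ^ n))} (hm : ∀ j ∈ G, m < j)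
    (hZ : 1 - 2 * δ ^ 2 ≤ Zi D n m) :
    hybridDistortion D n (insert m G) ≤ hybridDistortion D n G + 2 * δ := by
  have hdiff : hybridDistortion D n (insert m G) - hybridDistortion D n G
      ≤ ∑ y, ∑ u ∈ vanishingFrom (2 ^ n) m,
          |Wi D n y m u - Wi D n y m (Function.update u m 1)| / 2 := by
    rw [hybridDistortion, hybridDistortion, ← sum_sub_distrib]
    refine sum_le_sum fun y _ => ?_
    rw [← mul_sub, ← sum_div, two_pow_eq_two_mul_two_pow_pred]
    calc _ ≤ (2 * 2 ^ (2 ^ n - 1) : ℝ)⁻¹ * (2 ^ (2 ^ n - 1) * ∑ u ∈ vanishingFrom (2 ^ n) m,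
            |Wi D n y m u - Wi D n y m (Function.update u m 1)|) := by
          gcongr; exact sum_hybridKernel_insert_sub_le hD0 hD1 hm y
      _ = _ := by field_simp
  linarith [sum_sum_abs_Wi_sub_Wi_le hD0 hD1 hδ hZ]

lemma sum_avgDist_eq_hybridDistortion (F : Finset (Fin (2 ^ n))) :
    ∑ ut ∈ univ.filter (fun ut : Fin (2 ^ n) → ZMod 2 => ∀ i, i ∉ F → ut i = 0),
        ((2 : ℝ) ^ F.card)⁻¹ * ((((2 ^ n : ℕ) : ℝ))⁻¹ * avgDist D n F ut)
      = hybridDistortion D n F := by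
  have hprod : ∀ y u, ∏ j, hybridKernel D n F y j u
      = ((2 : ℝ) ^ F.card)⁻¹ * ∏ i ∈ Fᶜ, post D n y i u := fun y u => by
    unfold hybridKernel
    rw [← prod_mul_prod_compl F]
    congr 1
    · rw [prod_congr rfl fun j hj => by rw [piecewise_eq_of_mem _ _ _ hj], prod_const, one_div,
        inv_pow]
    · exact prod_congr rfl fun j hj => by rw [piecewise_eq_of_notMem _ _ _ (mem_compl.1 hj)]
  simp_rw [avgDist, mul_sum, hybridDistortion, hprod]
  rw [sum_comm]
  refine sum_congr rfl fun y _ => ?_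
  rw [sum_supported_sum_agree, mul_sum]
  refine sum_congr rfl fun u _ => ?_
  ring

end Hybrid

/-- **Average distortion bound.**  If `Z^{(i)} ≥ 1 − 2δ²` for every frozen index, then the
average over the `2^{|F|}` frozen vectors (represented by the words supported on `F`) of
the normalized distortion is at most `D + 2|F|δ`. -/
theorem average_distortion_bound (D : ℝ) (hD0 : 0 < D) (hD1 : D < 1)
    (n : ℕ) (δ : ℝ) (hδ : 0 ≤ δ) (F : Finset (Fin (2 ^ n)))
    (hF : ∀ i ∈ F, 1 - 2 * δ ^ 2 ≤ Zi D n i) :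
    ∑ ut ∈ Finset.univ.filter (fun ut : Fin (2 ^ n) → ZMod 2 => ∀ i, i ∉ F → ut i = 0),
        ((2 : ℝ) ^ F.card)⁻¹ * ((((2 ^ n : ℕ) : ℝ))⁻¹ * avgDist D n F ut)
      ≤ D + 2 * F.card * δ := by
  rw [sum_avgDist_eq_hybridDistortion]
  suffices ∀ G ⊆ F, hybridDistortion D n G ≤ D + 2 * G.card * δ from this F subset_rfl
  intro G
  induction G using Finset.induction_on_min with
  | empty => simp [hybridDistortion_empty hD0 hD1]
  | insert m G hm ih =>
    intro hGF
    have hstep := hybridDistortion_insert_le hD0 hD1 hδ hm (hF m (hGF (mem_insert_self m G)))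
    rw [card_insert_of_notMem fun h => lt_irrefl m (hm m h)]
    push_cast
    linarith [ih ((subset_insert m G).trans hGF)]

end
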